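/- Under the hypotheses of the previous estimate (pointwise bounds c_f·f' ≤ f_ε' ≤ C_f·f', c_σ·σ̄ ≤ σ ≤ C_σ·σ̄, and ∫_ℝ ρ(y)² dy < ∞), for every δ > 0 there exists M > 0, independent of ε, such that for all ε > 0: ∫_{|y| > M} ρ_ε(y)² dy < δ, i.e., the tails of the densities ρ_ε² are uniformly small. -/

import Mathlib

open MeasureTheory Real Filter Topology

/-!
Substituting `y = f_ε z` turns the tail `∫_{|y| > C_f M} ρ_ε²` into `∫_{|f_ε z| > C_f M} dz / (σ² f_ε')`.
The bounds on `σ` and `f_ε'` dominate this integrand by `(c_σ² c_f)⁻¹ f' (ρ ∘ f)²`, and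
`|f_ε| ≤ C_f |f|` (both vanish at `0` and `f_ε' ≤ C_f f'`) puts the domain inside `{|f z| > M}`.
Substituting `y = f z` back bounds the tail by `(c_σ² c_f)⁻¹ ∫_{|y| > M} ρ²`, which is small for
large `M` uniformly in `ε`.
-/

theorem tendsto_setIntegral_lt_abs_atTop {h : ℝ → ℝ} (hh : Integrable h) :
    Tendsto (fun M => ∫ y in {y : ℝ | M < |y|}, h y) atTop (𝓝 0) := by
  have hmeas : ∀ M : ℝ, MeasurableSet {y : ℝ | M < |y|} := fun M =>
    measurableSet_lt measurable_const continuous_abs.measurable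
  simp_rw [← integral_indicator (hmeas _)]
  rw [← integral_zero ℝ ℝ]
  refine tendsto_integral_filter_of_dominated_convergence (fun y => ‖h y‖)
    (Eventually.of_forall fun M => (hh.indicator (hmeas M)).aestronglyMeasurable)
    (Eventually.of_forall fun M => ae_of_all _ fun y => norm_indicator_le_norm_self _ _)
    hh.norm (ae_of_all _ fun y => tendsto_const_nhds.congr' ?_)
  filter_upwards [eventually_ge_atTop |y|] with M hM
  simp [Set.indicator_of_notMem (show y ∉ {y : ℝ | M < |y|} from not_lt.mpr hM)]

theorem abs_le_mul_abs_of_hasDerivAt_le {f f' φ φ' : ℝ → ℝ} {C : ℝ} (hC : 0 ≤ C)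
    (hf : ∀ x, HasDerivAt f (f' x) x) (hφ : ∀ x, HasDerivAt φ (φ' x) x)
    (hf0 : f 0 = 0) (hφ0 : φ 0 = 0) (hφ'_nonneg : ∀ x, 0 ≤ φ' x) (hφ'_le : ∀ x, φ' x ≤ C * f' x)
    (z : ℝ) : |φ z| ≤ C * |f z| := by
  have hmono : Monotone φ := monotone_of_hasDerivAt_nonneg hφ hφ'_nonneg
  have hanti : Antitone fun x => φ x - C * f x :=
    antitone_of_hasDerivAt_nonpos (fun x => (hφ x).sub ((hf x).const_mul C))
      fun x => sub_nonpos.mpr (hφ'_le x)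
  rcases le_total 0 z with hz | hz
  · have h1 := hmono hz
    have h2 := hanti hz
    simp only [hφ0, hf0, mul_zero, sub_zero] at h1 h2
    rw [abs_of_nonneg h1]
    nlinarith [le_abs_self (f z)]
  · have h1 := hmono hz
    have h2 := hanti hz
    simp only [hφ0, hf0, mul_zero, sub_zero] at h1 h2
    rw [abs_of_nonpos h1]
    nlinarith [neg_abs_le (f z)]

noncomputable def naturalScaleDensity (σ f' g : ℝ → ℝ) (x : ℝ) : ℝ := 1 / (σ (g x) * f' (g x))

theorem naturalScaleDensity_apply {σ f f' g : ℝ → ℝ} (hg : Function.LeftInverse g f) (z : ℝ) :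
    naturalScaleDensity σ f' g (f z) = 1 / (σ z * f' z) := by
  rw [naturalScaleDensity, hg z]

theorem image_setOf_lt_abs {φ : ℝ → ℝ} (hφ : Function.Surjective φ) (M : ℝ) :
    φ '' {z | M < |φ z|} = {y | M < |y|} :=
  Set.image_preimage_eq {y : ℝ | M < |y|} hφ

theorem measurableSet_setOf_lt_abs {φ : ℝ → ℝ} (hφ : Continuous φ) (M : ℝ) :
    MeasurableSet {z | M < |φ z|} :=
  measurableSet_lt measurable_const (continuous_abs.comp hφ).measurable

theorem setIntegral_lt_abs_eq_of_hasDerivAt {φ φ' : ℝ → ℝ} (hφ : ∀ x, HasDerivAt φ (φ' x) x)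
    (hbij : Function.Bijective φ) (M : ℝ) (F : ℝ → ℝ) :
    ∫ y in {y | M < |y|}, F y = ∫ z in {z | M < |φ z|}, |φ' z| * F (φ z) := by
  rw [← image_setOf_lt_abs hbij.surjective]
  exact integral_image_eq_integral_abs_deriv_smul
    (measurableSet_setOf_lt_abs (continuous_iff_continuousAt.mpr fun x => (hφ x).continuousAt) M)
    (fun x _ => (hφ x).hasDerivWithinAt) hbij.injective.injOn F

theorem integrableOn_lt_abs_iff_of_hasDerivAt {φ φ' : ℝ → ℝ} (hφ : ∀ x, HasDerivAt φ (φ' x) x)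
    (hbij : Function.Bijective φ) (M : ℝ) (F : ℝ → ℝ) :
    IntegrableOn F {y | M < |y|} ↔ IntegrableOn (fun z => |φ' z| * F (φ z)) {z | M < |φ z|} := by
  rw [← image_setOf_lt_abs hbij.surjective]
  exact integrableOn_image_iff_integrableOn_abs_deriv_smul
    (measurableSet_setOf_lt_abs (continuous_iff_continuousAt.mpr fun x => (hφ x).continuousAt) M)
    (fun x _ => (hφ x).hasDerivWithinAt) hbij.injective.injOn F

theorem abs_mul_one_div_mul_sq {s x : ℝ} (hs : s ≠ 0) (hx : 0 < x) :
    |x| * (1 / (s * x)) ^ 2 = 1 / (s ^ 2 * x) := by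
  rw [abs_of_pos hx]
  field_simp

theorem abs_mul_one_div_mul_sq_le {s s₀ x x₀ c c' : ℝ} (hs₀ : 0 < s₀) (hx₀ : 0 < x₀) (hc : 0 < c)
    (hc' : 0 < c') (hs : c * s₀ ≤ s) (hx : c' * x₀ ≤ x) :
    |x| * (1 / (s * x)) ^ 2 ≤ 1 / (c ^ 2 * c') * (|x₀| * (1 / (s₀ * x₀)) ^ 2) := by
  have hs_pos : 0 < s := lt_of_lt_of_le (by positivity) hs
  have hx_pos : 0 < x := lt_of_lt_of_le (by positivity) hx
  calc |x| * (1 / (s * x)) ^ 2 = 1 / (s ^ 2 * x) := abs_mul_one_div_mul_sq hs_pos.ne' hx_pos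
    _ ≤ 1 / ((c * s₀) ^ 2 * (c' * x₀)) := by gcongr
    _ = 1 / (c ^ 2 * c') * (|x₀| * (1 / (s₀ * x₀)) ^ 2) := by
      rw [abs_mul_one_div_mul_sq hs₀.ne' hx₀]
      field_simp

theorem setIntegral_lt_abs_sq_naturalScaleDensity_le {σ σ₀ f f' g φ φ' ψ : ℝ → ℝ} {cσ c C : ℝ}
    (hσ₀ : ∀ y, 0 < σ₀ y) (hcσ : 0 < cσ) (hσ : ∀ y, cσ * σ₀ y ≤ σ y)
    (hf : ∀ x, HasDerivAt f (f' x) x) (hf' : ∀ x, 0 < f' x) (hf0 : f 0 = 0)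
    (hg : Function.LeftInverse g f) (hg' : Function.RightInverse g f)
    (hφ : ∀ x, HasDerivAt φ (φ' x) x) (hφ0 : φ 0 = 0) (hc : 0 < c) (hC : 0 < C)
    (hφ' : ∀ x, c * f' x ≤ φ' x ∧ φ' x ≤ C * f' x)
    (hψ : Function.LeftInverse ψ φ) (hψ' : Function.RightInverse ψ φ)
    (hint : Integrable fun y => naturalScaleDensity σ₀ f' g y ^ 2) (M : ℝ) :
    ∫ y in {y | C * M < |y|}, naturalScaleDensity σ φ' ψ y ^ 2 ≤
      1 / (cσ ^ 2 * c) * ∫ y in {y | M < |y|}, naturalScaleDensity σ₀ f' g y ^ 2 := by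
  have hf_bij : Function.Bijective f := Function.bijective_iff_has_inverse.mpr ⟨g, hg, hg'⟩
  have hφ_bij : Function.Bijective φ := Function.bijective_iff_has_inverse.mpr ⟨ψ, hψ, hψ'⟩
  set G : ℝ → ℝ := fun z => |f' z| * naturalScaleDensity σ₀ f' g (f z) ^ 2
  have hG_nonneg : ∀ z, 0 ≤ 1 / (cσ ^ 2 * c) * G z := fun z => by positivity
  have hG_int : IntegrableOn G {z | M < |f z|} :=
    (integrableOn_lt_abs_iff_of_hasDerivAt hf hf_bij M _).mp hint.integrableOn
  have hsub : {z | C * M < |φ z|} ⊆ {z | M < |f z|} := fun z (hz : C * M < |φ z|) =>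
    have hφf := abs_le_mul_abs_of_hasDerivAt_le hC.le hf hφ hf0 hφ0
      (fun x => (mul_pos hc (hf' x)).le.trans (hφ' x).1) (fun x => (hφ' x).2) z
    lt_of_mul_lt_mul_left (hz.trans_le hφf) hC.le
  have hpointwise : ∀ z, |φ' z| * naturalScaleDensity σ φ' ψ (φ z) ^ 2 ≤ 1 / (cσ ^ 2 * c) * G z :=
    fun z => by
      simp only [G, naturalScaleDensity_apply hψ, naturalScaleDensity_apply hg]
      exact abs_mul_one_div_mul_sq_le (hσ₀ z) (hf' z) hcσ hc (hσ z) (hφ' z).1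
  rw [setIntegral_lt_abs_eq_of_hasDerivAt hφ hφ_bij, setIntegral_lt_abs_eq_of_hasDerivAt hf hf_bij,
    ← integral_const_mul]
  calc ∫ z in {z | C * M < |φ z|}, |φ' z| * naturalScaleDensity σ φ' ψ (φ z) ^ 2
      ≤ ∫ z in {z | C * M < |φ z|}, 1 / (cσ ^ 2 * c) * G z :=
        integral_mono_of_nonneg (ae_of_all _ fun z => by positivity)
          ((hG_int.mono_set hsub).const_mul _) (ae_of_all _ hpointwise)
    _ ≤ ∫ z in {z | M < |f z|}, 1 / (cσ ^ 2 * c) * G z :=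
        setIntegral_mono_set (hG_int.const_mul _) (ae_of_all _ hG_nonneg) hsub.eventuallyLE

theorem stmt_2_general
    (σ σbar f fd g ρ : ℝ → ℝ)
    (fε fεd gε ρε : ℝ → ℝ → ℝ)  -- families indexed by ε
    (cσ Cσ cf Cf : ℝ)
    (hσbar : ∀ y, 0 < σbar y)
    (hcσ : 0 < cσ)
    (hσb : ∀ y, cσ * σbar y ≤ σ y ∧ σ y ≤ Cσ * σbar y)
    (hf : ∀ x, HasDerivAt f (fd x) x)
    (hfε : ∀ ε, 0 < ε → ∀ x, HasDerivAt (fε ε) (fεd ε x) x)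
    (hfd : ∀ x, 0 < fd x)
    (hf0 : f 0 = 0) (hfε0 : ∀ ε, 0 < ε → fε ε 0 = 0)
    (hcf : 0 < cf) (hCf : 0 < Cf)
    (hbound : ∀ ε, 0 < ε → ∀ y, cf * fd y ≤ fεd ε y ∧ fεd ε y ≤ Cf * fd y)
    (hgl : Function.LeftInverse g f) (hgr : Function.RightInverse g f)
    (hgεl : ∀ ε, 0 < ε → Function.LeftInverse (gε ε) (fε ε))
    (hgεr : ∀ ε, 0 < ε → Function.RightInverse (gε ε) (fε ε))
    (hρ : ∀ x, ρ x = 1 / (σbar (g x) * fd (g x)))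
    (hρε : ∀ ε, 0 < ε → ∀ x, ρε ε x = 1 / (σ (gε ε x) * fεd ε (gε ε x)))
    (hint : Integrable fun y => ρ y ^ 2) :
    ∀ δ : ℝ, 0 < δ → ∃ M : ℝ, 0 < M ∧
      ∀ ε, 0 < ε → (∫ y in {y : ℝ | M < |y|}, ρε ε y ^ 2) < δ := by
  intro δ hδ
  obtain rfl : ρ = naturalScaleDensity σbar fd g := funext hρ
  have htail := (tendsto_setIntegral_lt_abs_atTop hint).const_mul (1 / (cσ ^ 2 * cf))
  rw [mul_zero] at htail
  obtain ⟨M, hMδ, hM⟩ := ((htail.eventually (gt_mem_nhds hδ)).and (eventually_gt_atTop 0)).exists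
  refine ⟨Cf * M, by positivity, fun ε hε => ?_⟩
  rw [show ρε ε = naturalScaleDensity σ (fεd ε) (gε ε) from funext (hρε ε hε)]
  exact (setIntegral_lt_abs_sq_naturalScaleDensity_le hσbar hcσ (fun y => (hσb y).1) hf hfd hf0
    hgl hgr (hfε ε hε) (hfε0 ε hε) hcf hCf (hbound ε hε) (hgεl ε hε) (hgεr ε hε) hint M).trans_lt hMδ

theorem stmt_2
    (σ σbar f fd g ρ : ℝ → ℝ)
    (fε fεd gε ρε : ℝ → ℝ → ℝ)  -- families indexed by ε
    (a A cσ Cσ cf Cf : ℝ)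
    (ha : 0 < a) (hσ : ∀ y, a ≤ σ y ∧ σ y ≤ A)
    (hσbar : ∀ y, 0 < σbar y)
    (hcσ : 0 < cσ) (hCσ : 0 < Cσ)
    (hσb : ∀ y, cσ * σbar y ≤ σ y ∧ σ y ≤ Cσ * σbar y)
    (hf : ∀ x, HasDerivAt f (fd x) x)
    (hfε : ∀ ε, 0 < ε → ∀ x, HasDerivAt (fε ε) (fεd ε x) x)
    (hfd : ∀ x, 0 < fd x) (hfεd : ∀ ε, 0 < ε → ∀ x, 0 < fεd ε x)
    (hf0 : f 0 = 0) (hfε0 : ∀ ε, 0 < ε → fε ε 0 = 0)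
    (hcf : 0 < cf) (hCf : 0 < Cf)
    (hbound : ∀ ε, 0 < ε → ∀ y, cf * fd y ≤ fεd ε y ∧ fεd ε y ≤ Cf * fd y)
    (hgl : Function.LeftInverse g f) (hgr : Function.RightInverse g f)
    (hgεl : ∀ ε, 0 < ε → Function.LeftInverse (gε ε) (fε ε))
    (hgεr : ∀ ε, 0 < ε → Function.RightInverse (gε ε) (fε ε))
    (hρ : ∀ x, ρ x = 1 / (σbar (g x) * fd (g x)))
    (hρε : ∀ ε, 0 < ε → ∀ x, ρε ε x = 1 / (σ (gε ε x) * fεd ε (gε ε x)))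
    (hint : Integrable fun y => ρ y ^ 2) :
    ∀ δ : ℝ, 0 < δ → ∃ M : ℝ, 0 < M ∧
      ∀ ε, 0 < ε → (∫ y in {y : ℝ | M < |y|}, ρε ε y ^ 2) < δ :=
  stmt_2_general σ σbar f fd g ρ fε fεd gε ρε cσ Cσ cf Cf hσbar hcσ hσb hf hfε hfd hf0 hfε0 hcf hCf
    hbound hgl hgr hgεl hgεr hρ hρε hint
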